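/- arXiv:1808.02099 — 3 statements merged into one kernel-verified Lean document; each statement's English description precedes it below -/
import Mathlib

section
/- Let k be a field, A = k[x₁,…,x_s], J = ⟨f₁,…,f_r⟩ an ideal of A, B = A/J, and n ≥ 1. For 1 ≤ i ≤ r and β ∈ ℕ^s with 0 ≤ |β| ≤ n−1, set F^i_β := (d^n_A(x))^β · d^n_A(f_i) ∈ Ω^{(n)}_{A/k}, where (d^n_A(x))^β := (d^n_A(x₁))^{β₁}⋯(d^n_A(x_s))^{β_s}. Then the B-submodule of Ω^{(n)}_{A/k} ⊗_A B generated by { F^i_β ⊗ 1 : 1 ≤ i ≤ r, 0 ≤ |β| ≤ n−1 } equals the B-submodule generated by the image of the map J → Ω^{(n)}_{A/k} ⊗_A B, c ↦ d^n_A(c) ⊗ 1. -/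
set_option synthInstance.maxHeartbeats 1000000
set_option maxHeartbeats 1000000

open TensorProduct

section Defs

variable (k A : Type*) [CommRing k] [CommRing A] [Algebra k A]

/-- The ring of principal parts of order `n`: `(A ⊗[k] A) ⧸ I_A^{n+1}`,
an `A`-algebra via the left factor. -/
noncomputable abbrev PParts (n : ℕ) : Type _ :=
  (A ⊗[k] A) ⧸ (KaehlerDifferential.ideal k A ^ (n + 1))

/-- The module of Kähler differentials of order `n`, `Ω^{(n)}_{A/k} = I_A/I_A^{n+1}`,
realized as the `A`-submodule `I_A/I_A^{n+1}` of `(A ⊗[k] A) ⧸ I_A^{n+1}`. -/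
noncomputable def OmegaMod (n : ℕ) : Submodule A (PParts k A n) :=
  Submodule.restrictScalars A
    (Ideal.map (Ideal.Quotient.mk (KaehlerDifferential.ideal k A ^ (n + 1)))
      (KaehlerDifferential.ideal k A))

/-- The canonical derivation of order `n`, with values in the ambient ring of principal parts:
`d^n_A(a) = (1 ⊗ a - a ⊗ 1) + I_A^{n+1}`. -/
noncomputable def dPP (n : ℕ) (a : A) : PParts k A n :=
  Ideal.Quotient.mk _ ((1 : A) ⊗ₜ[k] a - a ⊗ₜ[k] (1 : A))

theorem dPP_mem (n : ℕ) (a : A) : dPP k A n a ∈ OmegaMod k A n :=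
  Ideal.mem_map_of_mem _ (KaehlerDifferential.one_smul_sub_smul_one_mem_ideal k a)

theorem mul_dPP_mem (n : ℕ) (x : PParts k A n) (a : A) :
    x * dPP k A n a ∈ OmegaMod k A n :=
  Ideal.mul_mem_left _ x (dPP_mem k A n a)

/-- The canonical derivation of order `n` as a map into `Ω^{(n)}_{A/k}`. -/
noncomputable def dN (n : ℕ) (a : A) : OmegaMod k A n :=
  ⟨dPP k A n a, dPP_mem k A n a⟩

/-- The product `d^n_A(g) · d^n_A(a)`, an element of `Ω^{(n)}_{A/k}`. -/
noncomputable def dMulD (n : ℕ) (g a : A) : OmegaMod k A n :=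
  ⟨dPP k A n g * dPP k A n a, mul_dPP_mem k A n (dPP k A n g) a⟩

end Defs

section FDefs

variable (k : Type*) [CommRing k] {s : ℕ}

/-- `F^i_β = (d^n_A(x))^β · d^n_A(f_i)`, an element of `Ω^{(n)}_{A/k}` for
`A = k[x₁,…,x_s]`. -/
noncomputable def Fel (n : ℕ) (f : MvPolynomial (Fin s) k) (β : Fin s →₀ ℕ) :
    OmegaMod k (MvPolynomial (Fin s) k) n :=
  ⟨(∏ j, dPP k (MvPolynomial (Fin s) k) n (MvPolynomial.X j) ^ β j) *
      dPP k (MvPolynomial (Fin s) k) n f,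
    mul_dPP_mem k (MvPolynomial (Fin s) k) n _ f⟩

end FDefs

/-!
In `B ⊗_A Ω` every `c • ω` with `c ∈ J` vanishes. With the Leibniz rule
`d(ab) = a db + b da + da db` this gives, for `c ∈ J`,
`1 ⊗ p dg dc = 1 ⊗ p d(gc) - g (1 ⊗ p dc)` and `1 ⊗ p d(ac) = a (1 ⊗ p dc) + 1 ⊗ (p da) dc`.
The first identity shows inductively that `1 ⊗ (dx)^β dc` lies in the span of the `1 ⊗ dc`.
The second reduces the converse, for all `p` at once, to the generators `c = f_i`. There one uses
that the ring of principal parts of `k[x]` is spanned over `A` by the monomials `(dx)^β` (it is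
generated by the `dx_j`, since `1 ⊗ x_j = x_j ⊗ 1 + dx_j`) and that `(dx)^β df_i = 0` once
`|β| ≥ n`, as it lies in `I^{|β|+1}`.
-/

section Leibniz

variable {k A : Type*} [CommRing k] [CommRing A] [Algebra k A] {n : ℕ}

lemma dPP_zero : dPP k A n 0 = 0 := by
  simp [dPP]

lemma dPP_add (a b : A) : dPP k A n (a + b) = dPP k A n a + dPP k A n b := by
  simp only [dPP, tmul_add, add_tmul, ← map_add]
  congr 1
  abel

lemma dPP_mul (a b : A) :
    dPP k A n (a * b) = a • dPP k A n b + b • dPP k A n a + dPP k A n a * dPP k A n b := by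
  have smul_mk (c : A) (x : A ⊗[k] A) :
      c • Ideal.Quotient.mk (KaehlerDifferential.ideal k A ^ (n + 1)) x =
        Ideal.Quotient.mk _ (c • x) := rfl
  simp only [dPP, smul_mk, ← map_mul, ← map_add]
  congr 1
  simp only [smul_sub, smul_tmul', smul_eq_mul, mul_sub, sub_mul,
    Algebra.TensorProduct.tmul_mul_tmul, mul_one, one_mul, mul_comm b a]
  abel

lemma prod_dPP_pow_mul_dPP_eq_zero {ι : Type*} (t : Finset ι) (x : ι → A) (e : ι → ℕ)
    (he : n ≤ ∑ j ∈ t, e j) (a : A) :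
    (∏ j ∈ t, dPP k A n (x j) ^ e j) * dPP k A n a = 0 := by
  simp only [dPP, ← map_pow, ← map_prod, ← map_mul, Ideal.Quotient.eq_zero_iff_mem]
  refine Ideal.pow_le_pow_right (Nat.succ_le_succ he) ?_
  rw [pow_succ, ← Finset.prod_pow_eq_pow_sum]
  exact Ideal.mul_mem_mul
    (Ideal.prod_mem_prod fun j _ ↦ Ideal.pow_mem_pow
      (KaehlerDifferential.one_smul_sub_smul_one_mem_ideal k (x j)) _)
    (KaehlerDifferential.one_smul_sub_smul_one_mem_ideal k a)

end Leibniz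

section MulDPP

variable (k A : Type*) [CommRing k] [CommRing A] [Algebra k A] (n : ℕ)

noncomputable def mulDPP (a : A) : PParts k A n →ₗ[A] OmegaMod k A n where
  toFun p := ⟨p * dPP k A n a, mul_dPP_mem k A n p a⟩
  map_add' p q := Subtype.ext (add_mul p q _)
  map_smul' c p := Subtype.ext (smul_mul_assoc c p _)

variable {k A n}

@[simp]
lemma coe_mulDPP_apply (a : A) (p : PParts k A n) :
    (mulDPP k A n a p : PParts k A n) = p * dPP k A n a :=
  rfl

lemma mulDPP_apply_one (a : A) : mulDPP k A n a 1 = dN k A n a :=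
  Subtype.ext (one_mul _)

lemma mulDPP_zero : mulDPP k A n 0 = 0 :=
  LinearMap.ext fun p ↦ Subtype.ext <| by
    rw [coe_mulDPP_apply, dPP_zero, mul_zero, LinearMap.zero_apply, Submodule.coe_zero]

lemma mulDPP_add (a b : A) : mulDPP k A n (a + b) = mulDPP k A n a + mulDPP k A n b :=
  LinearMap.ext fun p ↦ Subtype.ext <| by
    rw [coe_mulDPP_apply, dPP_add, mul_add, LinearMap.add_apply, Submodule.coe_add,
      coe_mulDPP_apply, coe_mulDPP_apply]

lemma mulDPP_mul_apply (a b : A) (p : PParts k A n) :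
    mulDPP k A n (a * b) p =
      a • mulDPP k A n b p + b • mulDPP k A n a p + mulDPP k A n b (p * dPP k A n a) := by
  apply Subtype.ext
  simp only [coe_mulDPP_apply, dPP_mul, Submodule.coe_add, Submodule.coe_smul, mul_add,
    mul_smul_comm, mul_assoc]

end MulDPP

lemma Ideal.Quotient.one_tmul_smul_eq_zero {R M : Type*} [CommRing R] [AddCommGroup M]
    [Module R M] {J : Ideal R} {c : R} (hc : c ∈ J) (m : M) :
    (1 : R ⧸ J) ⊗ₜ[R] (c • m) = 0 := by
  rw [← smul_tmul, Algebra.smul_def, mul_one, Ideal.Quotient.algebraMap_eq,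
    Ideal.Quotient.eq_zero_iff_mem.mpr hc, zero_tmul]

section BaseChange

variable {k A : Type*} [CommRing k] [CommRing A] [Algebra k A] {n : ℕ}

lemma one_tmul_mulDPP_mem_of_mem_closure {J : Ideal A}
    {N : Submodule (A ⧸ J) ((A ⧸ J) ⊗[A] OmegaMod k A n)}
    (hN : ∀ c ∈ J, (1 : A ⧸ J) ⊗ₜ[A] dN k A n c ∈ N) {p : PParts k A n}
    (hp : p ∈ Submonoid.closure (Set.range (dPP k A n))) {c : A} (hc : c ∈ J) :
    (1 : A ⧸ J) ⊗ₜ[A] mulDPP k A n c p ∈ N := by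
  induction hp using Submonoid.closure_induction_right generalizing c with
  | one => simpa only [mulDPP_apply_one] using hN c hc
  | mul_right p _ _ hg ih =>
    obtain ⟨g, rfl⟩ := hg
    rw [eq_sub_of_add_eq' (mulDPP_mul_apply g c p).symm, tmul_sub, tmul_add,
      Ideal.Quotient.one_tmul_smul_eq_zero hc, add_zero, tmul_smul]
    exact N.sub_mem (ih (J.mul_mem_left g hc)) (N.smul_of_tower_mem g (ih hc))

lemma one_tmul_mulDPP_mem_of_mem_span {S : Set A}
    {M : Submodule (A ⧸ Ideal.span S) ((A ⧸ Ideal.span S) ⊗[A] OmegaMod k A n)}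
    (hM : ∀ g ∈ S, ∀ p, (1 : A ⧸ Ideal.span S) ⊗ₜ[A] mulDPP k A n g p ∈ M)
    {c : A} (hc : c ∈ Ideal.span S) (p : PParts k A n) :
    (1 : A ⧸ Ideal.span S) ⊗ₜ[A] mulDPP k A n c p ∈ M := by
  induction hc using Submodule.span_induction generalizing p with
  | mem g hg => exact hM g hg p
  | zero => simp only [mulDPP_zero, LinearMap.zero_apply, tmul_zero, M.zero_mem]
  | add a b _ _ ha hb =>
    rw [mulDPP_add, LinearMap.add_apply, tmul_add]
    exact M.add_mem (ha p) (hb p)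
  | smul a c hc ih =>
    rw [smul_eq_mul, mulDPP_mul_apply, tmul_add, tmul_add, tmul_smul,
      Ideal.Quotient.one_tmul_smul_eq_zero hc, add_zero]
    exact M.add_mem (M.smul_of_tower_mem a (ih p)) (ih _)

end BaseChange

section Polynomial

open MvPolynomial

variable {k σ : Type*} [CommRing k] {n : ℕ}

lemma adjoin_range_dPP_X_eq_top :
    Algebra.adjoin (MvPolynomial σ k)
      (Set.range fun j ↦ dPP k (MvPolynomial σ k) n (X j)) = ⊤ := by
  set T := Algebra.adjoin (MvPolynomial σ k) (Set.range fun j ↦ dPP k (MvPolynomial σ k) n (X j))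
  let ι₂ : MvPolynomial σ k →ₐ[k] PParts k (MvPolynomial σ k) n :=
    (Ideal.Quotient.mkₐ k _).comp
      (Algebra.TensorProduct.includeRight (R := k) (A := MvPolynomial σ k))
  have hι₂ : ∀ g, ι₂ g ∈ T := by
    suffices Algebra.adjoin k (Set.range X) ≤ (T.restrictScalars k).comap ι₂ by
      rw [adjoin_range_X] at this
      exact fun g ↦ this trivial
    refine Algebra.adjoin_le ?_
    rintro _ ⟨j, rfl⟩
    have : ι₂ (X j) = algebraMap (MvPolynomial σ k) (PParts k (MvPolynomial σ k) n) (X j) +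
        dPP k (MvPolynomial σ k) n (X j) := by
      change Ideal.Quotient.mk _ ((1 : MvPolynomial σ k) ⊗ₜ[k] X j) =
        Ideal.Quotient.mk _ ((X j : MvPolynomial σ k) ⊗ₜ[k] (1 : MvPolynomial σ k)) +
          Ideal.Quotient.mk _ _
      rw [← map_add, add_sub_cancel]
    change ι₂ (X j) ∈ T
    rw [this]
    exact T.add_mem (T.algebraMap_mem _) (Algebra.subset_adjoin ⟨j, rfl⟩)
  rw [eq_top_iff]
  rintro p -
  obtain ⟨t, rfl⟩ := Ideal.Quotient.mk_surjective p
  induction t using TensorProduct.induction_on with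
  | zero => exact T.zero_mem
  | tmul a g =>
    have : a • ι₂ g = Ideal.Quotient.mk _ (a ⊗ₜ g) := by
      change Ideal.Quotient.mk _ (a • ((1 : MvPolynomial σ k) ⊗ₜ[k] g)) = _
      rw [smul_tmul', smul_eq_mul, mul_one]
    rw [← this]
    exact T.smul_mem (hι₂ g) a
  | add x y hx hy =>
    rw [map_add]
    exact T.add_mem hx hy

lemma mem_span_prod_dPP_X_pow [Fintype σ] (p : PParts k (MvPolynomial σ k) n) :
    p ∈ Submodule.span (MvPolynomial σ k)
      (Set.range fun β : σ →₀ ℕ ↦ ∏ j, dPP k (MvPolynomial σ k) n (X j) ^ β j) := by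
  have hp : p ∈ Subalgebra.toSubmodule (Algebra.adjoin (MvPolynomial σ k)
      (Set.range fun j ↦ dPP k (MvPolynomial σ k) n (X j))) := by
    rw [adjoin_range_dPP_X_eq_top]
    trivial
  rw [Algebra.adjoin_eq_span] at hp
  refine Submodule.span_mono ?_ hp
  intro q hq
  obtain ⟨β, rfl⟩ := Submonoid.mem_closure_range_iff.mp hq
  exact ⟨β, (Finsupp.prod_fintype _ _ fun _ ↦ pow_zero _).symm⟩

lemma one_tmul_mulDPP_mem_of_forall_monomial [Fintype σ] {J : Ideal (MvPolynomial σ k)}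
    {M : Submodule (MvPolynomial σ k ⧸ J)
      ((MvPolynomial σ k ⧸ J) ⊗[MvPolynomial σ k] OmegaMod k (MvPolynomial σ k) n)}
    {g : MvPolynomial σ k}
    (hg : ∀ β : σ →₀ ℕ, ∑ j, β j ≤ n - 1 → (1 : MvPolynomial σ k ⧸ J) ⊗ₜ[MvPolynomial σ k]
      mulDPP k (MvPolynomial σ k) n g (∏ j, dPP k (MvPolynomial σ k) n (X j) ^ β j) ∈ M)
    (p : PParts k (MvPolynomial σ k) n) :
    (1 : MvPolynomial σ k ⧸ J) ⊗ₜ[MvPolynomial σ k] mulDPP k (MvPolynomial σ k) n g p ∈ M := by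
  let L := TensorProduct.mk (MvPolynomial σ k) (MvPolynomial σ k ⧸ J)
    (OmegaMod k (MvPolynomial σ k) n) 1 ∘ₗ mulDPP k (MvPolynomial σ k) n g
  suffices Submodule.span (MvPolynomial σ k)
      (Set.range fun β : σ →₀ ℕ ↦ ∏ j, dPP k (MvPolynomial σ k) n (X j) ^ β j) ≤
        (M.restrictScalars (MvPolynomial σ k)).comap L from
    this (mem_span_prod_dPP_X_pow p)
  rw [Submodule.span_le]
  rintro _ ⟨β, rfl⟩
  by_cases hβ : ∑ j, β j ≤ n - 1
  · exact hg β hβ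
  · have : mulDPP k (MvPolynomial σ k) n g (∏ j, dPP k (MvPolynomial σ k) n (X j) ^ β j) = 0 :=
      Subtype.ext (prod_dPP_pow_mul_dPP_eq_zero _ _ _ (by omega) g)
    change (1 : MvPolynomial σ k ⧸ J) ⊗ₜ[MvPolynomial σ k] _ ∈ M
    rw [this, tmul_zero]
    exact M.zero_mem

end Polynomial

theorem statement_1_general {k : Type*} [Field k] (s r n : ℕ)
    (f : Fin r → MvPolynomial (Fin s) k) :
    Submodule.span (MvPolynomial (Fin s) k ⧸ Ideal.span (Set.range f))
      { x : (MvPolynomial (Fin s) k ⧸ Ideal.span (Set.range f)) ⊗[MvPolynomial (Fin s) k]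
          ↥(OmegaMod k (MvPolynomial (Fin s) k) n) |
        ∃ (i : Fin r) (β : Fin s →₀ ℕ), (∑ j, β j) ≤ n - 1 ∧
          x = (1 : MvPolynomial (Fin s) k ⧸ Ideal.span (Set.range f)) ⊗ₜ Fel k n (f i) β } =
    Submodule.span (MvPolynomial (Fin s) k ⧸ Ideal.span (Set.range f))
      { x | ∃ c ∈ Ideal.span (Set.range f),
          x = (1 : MvPolynomial (Fin s) k ⧸ Ideal.span (Set.range f)) ⊗ₜ
            dN k (MvPolynomial (Fin s) k) n c } := by
  refine le_antisymm (Submodule.span_le.mpr ?_) (Submodule.span_le.mpr ?_)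
  · rintro _ ⟨i, β, -, rfl⟩
    refine one_tmul_mulDPP_mem_of_mem_closure ?_ ?_ (Ideal.subset_span ⟨i, rfl⟩)
    · exact fun c hc ↦ Submodule.subset_span ⟨c, hc, rfl⟩
    · exact Submonoid.prod_mem _ fun j _ ↦
        Submonoid.pow_mem _ (Submonoid.subset_closure (Set.mem_range_self _)) _
  · rintro _ ⟨c, hc, rfl⟩
    rw [← mulDPP_apply_one]
    refine one_tmul_mulDPP_mem_of_mem_span ?_ hc 1
    rintro _ ⟨i, rfl⟩
    exact one_tmul_mulDPP_mem_of_forall_monomial fun β hβ ↦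
      Submodule.subset_span ⟨i, β, hβ, rfl⟩

/-- For `A = k[x₁,…,x_s]`, `J = ⟨f₁,…,f_r⟩`, `B = A/J` and `n ≥ 1`, the
`B`-submodule of the base change of `Ω^{(n)}_{A/k}` to `B` generated by the elements
`F^i_β ⊗ 1` (for `1 ≤ i ≤ r` and `0 ≤ |β| ≤ n−1`) coincides with the `B`-submodule
generated by the image of `J → Ω^{(n)}_{A/k} ⊗_A B`, `c ↦ d^n_A(c) ⊗ 1`.
(The base change `Ω^{(n)}_{A/k} ⊗_A B` is realized here as `B ⊗[A] Ω^{(n)}_{A/k}`, which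
carries the canonical `B`-module structure in Mathlib.) -/
theorem statement_1 {k : Type*} [Field k] (s r n : ℕ) (hn : 1 ≤ n)
    (f : Fin r → MvPolynomial (Fin s) k) :
    Submodule.span (MvPolynomial (Fin s) k ⧸ Ideal.span (Set.range f))
      { x : (MvPolynomial (Fin s) k ⧸ Ideal.span (Set.range f)) ⊗[MvPolynomial (Fin s) k]
          ↥(OmegaMod k (MvPolynomial (Fin s) k) n) |
        ∃ (i : Fin r) (β : Fin s →₀ ℕ), (∑ j, β j) ≤ n - 1 ∧
          x = (1 : MvPolynomial (Fin s) k ⧸ Ideal.span (Set.range f)) ⊗ₜ Fel k n (f i) β } =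
    Submodule.span (MvPolynomial (Fin s) k ⧸ Ideal.span (Set.range f))
      { x | ∃ c ∈ Ideal.span (Set.range f),
          x = (1 : MvPolynomial (Fin s) k ⧸ Ideal.span (Set.range f)) ⊗ₜ
            dN k (MvPolynomial (Fin s) k) n c } :=
  statement_1_general s r n f
end

section
/- Let k be a field, A = k[x₁,…,x_s], J = ⟨f₁,…,f_r⟩, B = A/J, n ≥ 1, N = C(s+n, s) and M = C(s+n−1, s). Let T : B^{rM} → B^{N−1} be the B-linear map given by the transpose of the matrix Jac_n(f₁,…,f_r) with entries reduced modulo J, and let π : B^{N−1} → Ω^{(n)}_{B/k} send the basis vector e_α (for α ∈ ℕ^s, 1 ≤ |α| ≤ n) to (d^n_B(x̄))^α. Then the sequence B^{rM} → B^{N−1} → Ω^{(n)}_{B/k} → 0 is exact; i.e. π is surjective and its kernel is the image of T. -/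
/-!
Write `B = k[x]/J` with `J = (f₁, …, f_r)` and let `y₁, …, y_s` be new variables. The
`B`-algebra map `B[y] → B ⊗_k B`, `y_j ↦ 1 ⊗ x̄_j - x̄_j ⊗ 1`, is onto, its kernel is
generated by the Taylor expansions `f_i(x̄ + y)`, and it carries the ideal `(y)` onto `I_B`.
Hence `Ω^{(n)}_{B/k} = (y) / ((y)^{n+1} + (f_i(x̄ + y)))`, which is spanned by the monomials
`y^α` with `1 ≤ |α| ≤ n`. Modulo `(y)^{n+1}`, a relation `∑ v_α y^α = ∑ c_i f_i(x̄ + y)` only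
sees the coefficients of the `c_i` in degrees `≤ n - 1`, because `f_i(x̄ + y)` has no constant
term; and since the coefficient of `y^γ` in `f_i(x̄ + y)` is `f_i^{[γ]}(x̄)`, comparing the
coefficients of `y^α` says exactly `v = Jac_nᵀ w`.
-/

set_option synthInstance.maxHeartbeats 1000000
set_option maxHeartbeats 1000000

open TensorProduct

section Jac

open MvPolynomial

variable (k : Type*) [CommRing k] {s : ℕ}

/-- The Hasse derivative `f^{[γ]}`: the coefficient of `t^γ` in `f(x+t)`. -/
noncomputable def hasseDeriv (γ : Fin s →₀ ℕ) (f : MvPolynomial (Fin s) k) :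
    MvPolynomial (Fin s) k :=
  MvPolynomial.coeff γ
    (MvPolynomial.aeval (R := k)
      (fun i => MvPolynomial.C (MvPolynomial.X i) + MvPolynomial.X i) f)

/-- The entry `c_{β,α}` of the higher-order Jacobian matrix: `f^{[α−β]}` if `β ≤ α` and
`β ≠ α`, and `0` otherwise. -/
noncomputable def cEntry (f : MvPolynomial (Fin s) k) (β α : Fin s →₀ ℕ) :
    MvPolynomial (Fin s) k :=
  if β ≤ α ∧ β ≠ α then hasseDeriv k (α - β) f else 0

end Jac

/-- The row index set `{β ∈ ℕ^s : |β| ≤ n−1}` of the higher-order Jacobian matrix. -/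
def RowIdx (s n : ℕ) : Type := {β : Fin s →₀ ℕ // (∑ i, β i) ≤ n - 1}

/-- The column index set `{α ∈ ℕ^s : 1 ≤ |α| ≤ n}` of the higher-order Jacobian matrix. -/
def ColIdx (s n : ℕ) : Type := {α : Fin s →₀ ℕ // 1 ≤ (∑ i, α i) ∧ (∑ i, α i) ≤ n}

noncomputable instance (s m : ℕ) : Fintype {β : Fin s →₀ ℕ // (∑ i, β i) ≤ m} :=
  Fintype.ofInjective
    (fun β => (fun i => (⟨β.1 i, Nat.lt_succ_of_le
      (le_trans (Finset.single_le_sum (fun j _ => Nat.zero_le (β.1 j)) (Finset.mem_univ i)) β.2)⟩ :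
        Fin (m + 1))) : _ → (Fin s → Fin (m + 1)))
    (by
      intro a b h
      apply Subtype.ext
      ext i
      exact congrArg Fin.val (congrFun h i))

noncomputable instance (s n : ℕ) : Fintype (RowIdx s n) := by
  unfold RowIdx; infer_instance

noncomputable instance (s n : ℕ) : Fintype (ColIdx s n) := by
  unfold ColIdx
  exact Fintype.ofInjective
    (fun α => (⟨α.1, α.2.2⟩ : {β : Fin s →₀ ℕ // (∑ i, β i) ≤ n}))
    (by intro a b h; have h2 := congrArg Subtype.val h; exact Subtype.ext h2)

instance (s n : ℕ) : DecidableEq (RowIdx s n) := by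
  unfold RowIdx; infer_instance

instance (s n : ℕ) : DecidableEq (ColIdx s n) := by
  unfold ColIdx; infer_instance

/-- The higher-order Jacobian matrix `Jac_n(f)` of a single polynomial `f`. -/
noncomputable def JacMat {k : Type*} [CommRing k] {s : ℕ} (n : ℕ)
    (f : MvPolynomial (Fin s) k) :
    Matrix (RowIdx s n) (ColIdx s n) (MvPolynomial (Fin s) k) :=
  fun β α => cEntry k f β.1 α.1

/-- The higher-order Jacobian matrix `Jac_n(f₁,…,f_r)` of a family of polynomials,
with rows indexed by pairs `(i, β)`. -/
noncomputable def JacMatFam {k : Type*} [CommRing k] {s : ℕ} (n r : ℕ)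
    (f : Fin r → MvPolynomial (Fin s) k) :
    Matrix (Fin r × RowIdx s n) (ColIdx s n) (MvPolynomial (Fin s) k) :=
  fun p α => cEntry k (f p.1) p.2.1 α.1

namespace HigherKaehler

open MvPolynomial TensorProduct
open scoped Matrix

section IdealOfVars

variable {R σ ι : Type*} [CommRing R] [Fintype ι] {e : ι → σ →₀ ℕ}

theorem mem_idealOfVars_of_constantCoeff_eq_zero {p : MvPolynomial σ R}
    (hp : constantCoeff p = 0) : p ∈ idealOfVars σ R := by
  rw [← pow_one (idealOfVars σ R), mem_pow_idealOfVars_iff']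
  intro γ hγ
  rw [Nat.lt_one_iff, Finsupp.degree_eq_zero_iff] at hγ
  rwa [hγ, ← constantCoeff_eq]

variable (e) in
noncomputable def sumMonomials (v : ι → R) : MvPolynomial σ R :=
  ∑ i, monomial (e i) (v i)

theorem coeff_sumMonomials (he : Function.Injective e) (v : ι → R) (i : ι) :
    coeff (e i) (sumMonomials e v) = v i := by
  classical
  simp [sumMonomials, coeff_sum, coeff_monomial, he.eq_iff]

theorem coeff_sumMonomials_of_notMem_range (v : ι → R) {γ : σ →₀ ℕ}
    (hγ : γ ∉ Set.range e) :
    coeff γ (sumMonomials e v) = 0 := by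
  classical
  refine (coeff_sum _ _ _).trans (Finset.sum_eq_zero fun i _ => ?_)
  rw [coeff_monomial, if_neg fun h => hγ ⟨i, h⟩]

theorem sub_sumMonomials_mem_pow_idealOfVars (he : Function.Injective e) {p : MvPolynomial σ R}
    {m : ℕ} (hp : ∀ γ, Finsupp.degree γ < m → coeff γ p ≠ 0 → γ ∈ Set.range e) :
    p - sumMonomials e (fun i => coeff (e i) p) ∈ idealOfVars σ R ^ m := by
  rw [mem_pow_idealOfVars_iff']
  intro γ hγ
  rw [coeff_sub]
  by_cases hγe : γ ∈ Set.range e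
  · obtain ⟨i, rfl⟩ := hγe
    rw [coeff_sumMonomials he, sub_self]
  · rw [coeff_sumMonomials_of_notMem_range _ hγe, sub_zero]
    by_contra h
    exact hγe (hp γ hγ h)

end IdealOfVars

section Presentation

variable {k σ B : Type*} [CommRing k] [CommRing B] [Algebra k B]
  (q : MvPolynomial σ k →ₐ[k] B)

noncomputable def taylorExpansion : MvPolynomial σ k →ₐ[k] MvPolynomial σ B :=
  aeval fun j => C (q (X j)) + X j

theorem taylorExpansion_X (j : σ) : taylorExpansion q (X j) = C (q (X j)) + X j :=
  aeval_X _ j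

noncomputable def toTensor : MvPolynomial σ B →ₐ[B] B ⊗[k] B :=
  aeval fun j => 1 ⊗ₜ[k] q (X j) - q (X j) ⊗ₜ[k] 1

theorem toTensor_C (b : B) : toTensor q (C b) = b ⊗ₜ[k] 1 :=
  aeval_C _ b

theorem toTensor_X (j : σ) : toTensor q (X j) = 1 ⊗ₜ[k] q (X j) - q (X j) ⊗ₜ[k] 1 :=
  aeval_X _ j

theorem toTensor_taylorExpansion (a : MvPolynomial σ k) :
    toTensor q (taylorExpansion q a) = 1 ⊗ₜ[k] q a := by
  suffices ((toTensor q).restrictScalars k).comp (taylorExpansion q) =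
      Algebra.TensorProduct.includeRight.comp q from
    AlgHom.congr_fun this a
  refine MvPolynomial.algHom_ext fun j => ?_
  simp [taylorExpansion, toTensor_X]

theorem constantCoeff_taylorExpansion (a : MvPolynomial σ k) :
    constantCoeff (taylorExpansion q a) = q a := by
  suffices constantCoeff.comp (taylorExpansion q).toRingHom = q.toRingHom from
    RingHom.congr_fun this a
  refine MvPolynomial.ringHom_ext (fun c => ?_) fun j => ?_ <;> simp [taylorExpansion]

variable {q}

theorem toTensor_surjective (hq : Function.Surjective q) : Function.Surjective (toTensor q) := by
  intro z
  induction z using TensorProduct.induction_on with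
  | zero => exact ⟨0, map_zero _⟩
  | tmul b₁ b₂ =>
    obtain ⟨a, rfl⟩ := hq b₂
    exact ⟨C b₁ * taylorExpansion q a, by
      rw [map_mul, toTensor_C, toTensor_taylorExpansion, Algebra.TensorProduct.tmul_mul_tmul,
        mul_one, one_mul]⟩
  | add x y hx hy =>
    obtain ⟨p, rfl⟩ := hx
    obtain ⟨p', rfl⟩ := hy
    exact ⟨p + p', map_add _ _ _⟩

variable (q) in
theorem map_ker_le_ker_toTensor :
    (RingHom.ker q).map (taylorExpansion q) ≤ RingHom.ker (toTensor q) := by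
  rw [Ideal.map_le_iff_le_comap]
  intro a ha
  simp [toTensor_taylorExpansion, RingHom.mem_ker.mp ha]

noncomputable def ofTensor (hq : Function.Surjective q) :
    B ⊗[k] B →ₐ[k] MvPolynomial σ B ⧸ (RingHom.ker q).map (taylorExpansion q) :=
  Algebra.TensorProduct.productMap
    ((Ideal.Quotient.mkₐ k _).comp (IsScalarTower.toAlgHom k B _))
    (q.liftOfSurjective hq ((Ideal.Quotient.mkₐ k _).comp (taylorExpansion q))
      -- the ascription keeps this proof in the form `AlgHom.liftOfSurjective_apply` matches
      (show RingHom.ker q.toRingHom ≤ _ from fun _ ha =>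
        Ideal.Quotient.eq_zero_iff_mem.mpr (Ideal.mem_map_of_mem _ ha)))

theorem ofTensor_toTensor (hq : Function.Surjective q) (p : MvPolynomial σ B) :
    ofTensor hq (toTensor q p) = Ideal.Quotient.mk _ p := by
  suffices (ofTensor hq).toRingHom.comp (toTensor q).toRingHom = Ideal.Quotient.mk _ from
    RingHom.congr_fun this p
  refine MvPolynomial.ringHom_ext (fun b => ?_) fun j => ?_
  · simp [ofTensor]
  · change ofTensor hq (toTensor q (X j)) = _
    rw [toTensor_X, map_sub, ofTensor, Algebra.TensorProduct.productMap_apply_tmul,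
      Algebra.TensorProduct.productMap_apply_tmul, AlgHom.liftOfSurjective_apply, map_one,
      map_one, one_mul, mul_one, AlgHom.comp_apply, AlgHom.comp_apply, taylorExpansion_X,
      IsScalarTower.toAlgHom_apply, Ideal.Quotient.mkₐ_eq_mk, ← map_sub, algebraMap_eq,
      add_sub_cancel_left]

theorem ker_toTensor (hq : Function.Surjective q) :
    RingHom.ker (toTensor q) = (RingHom.ker q).map (taylorExpansion q) := by
  refine le_antisymm (fun p hp => ?_) (map_ker_le_ker_toTensor q)
  rw [← Ideal.Quotient.eq_zero_iff_mem, ← ofTensor_toTensor hq, RingHom.mem_ker.mp hp, map_zero]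

theorem taylorExpansion_mem_idealOfVars {a : MvPolynomial σ k} (ha : q a = 0) :
    taylorExpansion q a ∈ idealOfVars σ B :=
  mem_idealOfVars_of_constantCoeff_eq_zero (by rw [constantCoeff_taylorExpansion, ha])

theorem map_toTensor_idealOfVars (hq : Function.Surjective q) :
    (idealOfVars σ B).map (toTensor q) = KaehlerDifferential.ideal k B := by
  refine le_antisymm ?_ ?_
  · rw [Ideal.map_span, Ideal.span_le, ← Set.range_comp, Set.range_subset_iff]
    intro j
    simp [toTensor_X]
  · rw [← KaehlerDifferential.span_range_eq_ideal, Ideal.span_le, Set.range_subset_iff]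
    intro b
    obtain ⟨a, rfl⟩ := hq b
    have hmem : taylorExpansion q a - C (q a) ∈ idealOfVars σ B :=
      mem_idealOfVars_of_constantCoeff_eq_zero (by simp [constantCoeff_taylorExpansion])
    simpa [toTensor_taylorExpansion, toTensor_C] using Ideal.mem_map_of_mem (toTensor q) hmem

variable (q) in
noncomputable def toPrincipalParts (n : ℕ) : MvPolynomial σ B →ₐ[B] PParts k B n :=
  (Ideal.Quotient.mkₐ B _).comp (toTensor q)

theorem toPrincipalParts_X (n : ℕ) (j : σ) :
    toPrincipalParts q n (X j) = dPP k B n (q (X j)) :=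
  congrArg (Ideal.Quotient.mk _) (toTensor_X q j)

theorem toPrincipalParts_monomial [Fintype σ] (n : ℕ) (γ : σ →₀ ℕ) (c : B) :
    toPrincipalParts q n (monomial γ c) = c • ∏ j, dPP k B n (q (X j)) ^ γ j := by
  rw [monomial_eq, map_mul, ← algebraMap_eq, AlgHom.commutes, ← Algebra.smul_def,
    Finsupp.prod_fintype _ _ fun _ => pow_zero _]
  simp [toPrincipalParts_X]

theorem toPrincipalParts_surjective (hq : Function.Surjective q) (n : ℕ) :
    Function.Surjective (toPrincipalParts q n) :=
  Ideal.Quotient.mk_surjective.comp (toTensor_surjective hq)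

theorem ker_toPrincipalParts (hq : Function.Surjective q) (n : ℕ) :
    RingHom.ker (toPrincipalParts q n) =
      idealOfVars σ B ^ (n + 1) ⊔ (RingHom.ker q).map (taylorExpansion q) := by
  have : RingHom.ker (toPrincipalParts q n) =
      (KaehlerDifferential.ideal k B ^ (n + 1)).comap (toTensor q) := by
    ext p
    simp [toPrincipalParts, Ideal.Quotient.eq_zero_iff_mem]
  rw [this, ← map_toTensor_idealOfVars hq, ← Ideal.map_pow,
    Ideal.comap_map_of_surjective' _ (toTensor_surjective hq), ker_toTensor hq]

theorem map_toPrincipalParts_idealOfVars (hq : Function.Surjective q) (n : ℕ) :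
    (idealOfVars σ B).map (toPrincipalParts q n) =
      (KaehlerDifferential.ideal k B).map (Ideal.Quotient.mk _) := by
  calc (idealOfVars σ B).map (toPrincipalParts q n)
      = ((idealOfVars σ B).map (toTensor q)).map (Ideal.Quotient.mk _) :=
        (Ideal.map_map _ _).symm
    _ = _ := by rw [map_toTensor_idealOfVars hq]

end Presentation

section HigherOrderJacobian

variable {k B : Type*} [CommRing k] [CommRing B] [Algebra k B] {s : ℕ}

theorem coeff_taylorExpansion (q : MvPolynomial (Fin s) k →ₐ[k] B) (γ : Fin s →₀ ℕ)
    (a : MvPolynomial (Fin s) k) : coeff γ (taylorExpansion q a) = q (hasseDeriv k γ a) := by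
  have : taylorExpansion q = (mapAlgHom q).comp (aeval fun i => C (X i) + X i) :=
    MvPolynomial.algHom_ext fun j => by simp [taylorExpansion_X]
  rw [this, AlgHom.comp_apply, mapAlgHom_apply, coeff_map, hasseDeriv]
  rfl

theorem coeff_monomial_mul_taylorExpansion (q : MvPolynomial (Fin s) k →ₐ[k] B)
    {a : MvPolynomial (Fin s) k} (ha : q a = 0) (β γ : Fin s →₀ ℕ) (c : B) :
    coeff γ (monomial β c * taylorExpansion q a) = q (cEntry k a β γ) * c := by
  rw [coeff_monomial_mul', cEntry]
  by_cases hβγ : β ≤ γ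
  · by_cases hβ : β = γ
    · subst hβ
      simp [← constantCoeff_eq, constantCoeff_taylorExpansion, ha]
    · rw [if_pos hβγ, if_pos ⟨hβγ, hβ⟩, coeff_taylorExpansion, mul_comm]
  · rw [if_neg hβγ, if_neg fun h => hβγ h.1, map_zero, zero_mul]

end HigherOrderJacobian

section OmegaMonomials

theorem ColIdx.ne_zero {s n : ℕ} (α : ColIdx s n) : α.1 ≠ 0 := by
  intro h
  simpa [h] using α.2.1

theorem ColIdx.degree_lt {s n : ℕ} (α : ColIdx s n) : Finsupp.degree α.1 < n + 1 := by
  rw [Finsupp.degree_eq_sum]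
  exact Nat.lt_succ_of_le α.2.2

theorem apply_eq_zero_of_ker_eq_span {R S ι : Type*} [CommRing R] [CommRing S] {q : R →+* S}
    {f : ι → R} (hker : RingHom.ker q = Ideal.span (Set.range f)) (i : ι) : q (f i) = 0 := by
  rw [← RingHom.mem_ker, hker]
  exact Ideal.subset_span ⟨i, rfl⟩

variable (k : Type*) {B : Type*} [CommRing k] [CommRing B] [Algebra k B] (n : ℕ)

theorem prod_dPP_pow_mem_omegaMod {σ : Type*} [Fintype σ] (x : σ → B) {γ : σ →₀ ℕ}
    (hγ : γ ≠ 0) : ∏ j, dPP k B n (x j) ^ γ j ∈ OmegaMod k B n := by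
  classical
  obtain ⟨j, hj⟩ := Finsupp.ne_iff.mp hγ
  rw [Finset.prod_eq_mul_prod_sdiff_singleton_of_mem (Finset.mem_univ j)]
  exact Ideal.mul_mem_right _ _
    (Ideal.pow_mem_of_mem _ (dPP_mem k B n (x j)) _ (Nat.pos_of_ne_zero hj))

variable {s : ℕ}

noncomputable def omegaMonomial (x : Fin s → B) (α : ColIdx s n) : OmegaMod k B n :=
  ⟨∏ j, dPP k B n (x j) ^ α.1 j, prod_dPP_pow_mem_omegaMod k n x (ColIdx.ne_zero α)⟩

noncomputable def omegaMonomialMap (x : Fin s → B) :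
    (ColIdx s n → B) →ₗ[B] OmegaMod k B n :=
  Fintype.linearCombination B (omegaMonomial k n x)

theorem coe_omegaMonomialMap_single (x : Fin s → B) (α : ColIdx s n) :
    (omegaMonomialMap k n x (Pi.single α 1) : PParts k B n) = ∏ j, dPP k B n (x j) ^ α.1 j := by
  rw [omegaMonomialMap, Fintype.linearCombination_apply_single, one_smul, omegaMonomial]

variable {k n} (q : MvPolynomial (Fin s) k →ₐ[k] B)

theorem coe_omegaMonomialMap (v : ColIdx s n → B) :
    (omegaMonomialMap k n (fun j => q (X j)) v : PParts k B n) =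
      toPrincipalParts q n (sumMonomials (ι := ColIdx s n) Subtype.val v) := by
  rw [omegaMonomialMap, Fintype.linearCombination_apply, Submodule.coe_sum]
  simp only [sumMonomials, map_sum]
  exact Finset.sum_congr rfl fun α _ => (toPrincipalParts_monomial n α.1 (v α)).symm

theorem coe_omegaMonomialMap_coeff (hq : Function.Surjective q) {p : MvPolynomial (Fin s) B}
    (hp : p ∈ idealOfVars (Fin s) B) :
    (omegaMonomialMap k n (fun j => q (X j)) (fun α => coeff α.1 p) : PParts k B n) =
      toPrincipalParts q n p := by
  have hp₀ : coeff 0 p = 0 :=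
    (mem_pow_idealOfVars_iff' 1 p).mp (by rwa [pow_one]) 0 (by simp)
  have htrunc : p - sumMonomials (ι := ColIdx s n) Subtype.val (fun α => coeff α.1 p) ∈
      idealOfVars (Fin s) B ^ (n + 1) := by
    refine sub_sumMonomials_mem_pow_idealOfVars (ι := ColIdx s n) Subtype.val_injective
      fun γ hγ hpγ => ⟨⟨γ, ?_, ?_⟩, rfl⟩ <;> rw [← Finsupp.degree_eq_sum]
    · rw [Nat.one_le_iff_ne_zero, Ne, Finsupp.degree_eq_zero_iff]
      rintro rfl
      exact hpγ hp₀
    · omega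
  rw [coe_omegaMonomialMap, eq_comm, ← sub_eq_zero, ← map_sub, ← RingHom.mem_ker,
    ker_toPrincipalParts hq]
  exact Ideal.mem_sup_left htrunc

theorem omegaMonomialMap_surjective (hq : Function.Surjective q) :
    Function.Surjective (omegaMonomialMap k n fun j => q (X j)) := by
  intro ω
  have hω : (ω : PParts k B n) ∈ (idealOfVars (Fin s) B).map (toPrincipalParts q n) := by
    rw [map_toPrincipalParts_idealOfVars hq]
    exact ω.2
  obtain ⟨p, hp, hpω⟩ :=
    (Ideal.mem_map_iff_of_surjective _ (toPrincipalParts_surjective hq n)).mp hω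
  exact ⟨fun α => coeff α.1 p, Subtype.ext ((coe_omegaMonomialMap_coeff q hq hp).trans hpω)⟩

variable {r : ℕ} (f : Fin r → MvPolynomial (Fin s) k)

noncomputable def taylorCombination (w : Fin r × RowIdx s n → B) : MvPolynomial (Fin s) B :=
  ∑ p, monomial p.2.1 (w p) * taylorExpansion q (f p.1)

variable {q f}

theorem jacobian_transpose_mulVec_apply (hf : ∀ i, q (f i) = 0) (w : Fin r × RowIdx s n → B)
    (α : ColIdx s n) :
    (((JacMatFam n r f).map q)ᵀ *ᵥ w) α = coeff α.1 (taylorCombination q f w) := by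
  simp only [Matrix.mulVec, dotProduct, Matrix.transpose_apply, Matrix.map_apply, JacMatFam,
    taylorCombination, coeff_sum, coeff_monomial_mul_taylorExpansion q (hf _)]

theorem taylorCombination_mem_idealOfVars (hf : ∀ i, q (f i) = 0)
    (w : Fin r × RowIdx s n → B) :
    taylorCombination q f w ∈ idealOfVars (Fin s) B :=
  Ideal.sum_mem _ fun p _ => Ideal.mul_mem_left _ _ (taylorExpansion_mem_idealOfVars (hf p.1))

theorem sum_mul_taylorExpansion_sub_taylorCombination_mem (hf : ∀ i, q (f i) = 0)
    (c : Fin r → MvPolynomial (Fin s) B) :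
    ∑ i, c i * taylorExpansion q (f i) -
        taylorCombination (n := n) q f (fun p => coeff p.2.1 (c p.1)) ∈
      idealOfVars (Fin s) B ^ (n + 1) := by
  have : taylorCombination (n := n) q f (fun p => coeff p.2.1 (c p.1)) = ∑ i,
      sumMonomials (ι := RowIdx s n) Subtype.val (fun β => coeff β.1 (c i)) *
        taylorExpansion q (f i) := by
    simp only [taylorCombination, Fintype.sum_prod_type, sumMonomials, Finset.sum_mul]
  rw [this, ← Finset.sum_sub_distrib]
  refine Ideal.sum_mem _ fun i _ => ?_
  rw [← sub_mul, pow_succ]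
  refine Ideal.mul_mem_mul ?_ (taylorExpansion_mem_idealOfVars (hf i))
  refine sub_sumMonomials_mem_pow_idealOfVars (ι := RowIdx s n) Subtype.val_injective
    fun γ hγ _ => ⟨⟨γ, ?_⟩, rfl⟩
  rw [Finsupp.degree_eq_sum] at hγ
  omega

theorem omegaMonomialMap_jacobian_transpose_mulVec (hq : Function.Surjective q) (hf : ∀ i, q (f i) = 0)
    (w : Fin r × RowIdx s n → B) :
    omegaMonomialMap k n (fun j => q (X j)) (((JacMatFam n r f).map q)ᵀ *ᵥ w) = 0 := by
  have hT : ((JacMatFam n r f).map q)ᵀ *ᵥ w = fun α => coeff α.1 (taylorCombination q f w) :=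
    funext (jacobian_transpose_mulVec_apply hf w)
  have hker : taylorCombination q f w ∈ RingHom.ker (toPrincipalParts q n) := by
    rw [ker_toPrincipalParts hq]
    exact Ideal.mem_sup_right <| Ideal.sum_mem _ fun p _ =>
      Ideal.mul_mem_left _ _ (Ideal.mem_map_of_mem _ (hf p.1))
  rw [hT]
  exact Subtype.ext
    ((coe_omegaMonomialMap_coeff q hq (taylorCombination_mem_idealOfVars hf w)).trans hker)

theorem exists_jacobian_transpose_mulVec_eq (hq : Function.Surjective q)
    (hker : RingHom.ker q = Ideal.span (Set.range f)) {v : ColIdx s n → B}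
    (hv : omegaMonomialMap k n (fun j => q (X j)) v = 0) :
    ∃ w : Fin r × RowIdx s n → B, ((JacMatFam n r f).map q)ᵀ *ᵥ w = v := by
  have hf := apply_eq_zero_of_ker_eq_span (q := q.toRingHom) hker
  have hp : sumMonomials (ι := ColIdx s n) Subtype.val v ∈ idealOfVars (Fin s) B ^ (n + 1) ⊔
      Ideal.span (Set.range fun i => taylorExpansion q (f i)) := by
    rw [Set.range_comp', ← Ideal.map_span, ← hker, ← ker_toPrincipalParts hq, RingHom.mem_ker,
      ← coe_omegaMonomialMap, hv, ZeroMemClass.coe_zero]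
  obtain ⟨a, ha, g, hg, hag⟩ := Submodule.mem_sup.mp hp
  obtain ⟨c, rfl⟩ := Ideal.mem_span_range_iff_exists_fun.mp hg
  refine ⟨fun p => coeff p.2.1 (c p.1), funext fun α => ?_⟩
  have ha₀ : coeff α.1 a = 0 := (mem_pow_idealOfVars_iff' _ a).mp ha α.1 (ColIdx.degree_lt α)
  rw [jacobian_transpose_mulVec_apply hf, ← coeff_sumMonomials (ι := ColIdx s n) Subtype.val_injective v α,
    ← hag, coeff_add, ha₀, zero_add, eq_comm, ← sub_eq_zero, ← coeff_sub]
  exact (mem_pow_idealOfVars_iff' _ _).mp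
    (sum_mul_taylorExpansion_sub_taylorCombination_mem hf c) α.1 (ColIdx.degree_lt α)

theorem ker_omegaMonomialMap (hq : Function.Surjective q)
    (hker : RingHom.ker q = Ideal.span (Set.range f)) :
    LinearMap.ker (omegaMonomialMap k n fun j => q (X j)) =
      LinearMap.range (Matrix.mulVecLin ((JacMatFam n r f).map q)ᵀ) := by
  ext v
  rw [LinearMap.mem_ker, LinearMap.mem_range]
  refine ⟨exists_jacobian_transpose_mulVec_eq hq hker, ?_⟩
  rintro ⟨w, rfl⟩
  exact omegaMonomialMap_jacobian_transpose_mulVec hq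
    (apply_eq_zero_of_ker_eq_span (q := q.toRingHom) hker) w

end OmegaMonomials

end HigherKaehler

theorem statement_3_general {k : Type*} [Field k] (s r n : ℕ)
    (f : Fin r → MvPolynomial (Fin s) k) :
    ∃ π : ((ColIdx s n → (MvPolynomial (Fin s) k ⧸ Ideal.span (Set.range f))) →ₗ[
        MvPolynomial (Fin s) k ⧸ Ideal.span (Set.range f)]
        ↥(OmegaMod k (MvPolynomial (Fin s) k ⧸ Ideal.span (Set.range f)) n)),
      (∀ α : ColIdx s n,
        ((π (Pi.single α 1) :
            OmegaMod k (MvPolynomial (Fin s) k ⧸ Ideal.span (Set.range f)) n) :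
          PParts k (MvPolynomial (Fin s) k ⧸ Ideal.span (Set.range f)) n) =
        ∏ j, dPP k (MvPolynomial (Fin s) k ⧸ Ideal.span (Set.range f)) n
          (Ideal.Quotient.mk (Ideal.span (Set.range f)) (MvPolynomial.X j)) ^ α.1 j) ∧
      Function.Surjective π ∧
      LinearMap.ker π =
        LinearMap.range (Matrix.mulVecLin
          (((JacMatFam n r f).map (Ideal.Quotient.mk (Ideal.span (Set.range f)))).transpose)) := by
  have hq := Ideal.Quotient.mkₐ_surjective k (Ideal.span (Set.range f))
  refine ⟨HigherKaehler.omegaMonomialMap k n fun j => Ideal.Quotient.mkₐ k _ (MvPolynomial.X j),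
    HigherKaehler.coe_omegaMonomialMap_single k n _,
    HigherKaehler.omegaMonomialMap_surjective _ hq, ?_⟩
  rw [HigherKaehler.ker_omegaMonomialMap hq (Ideal.Quotient.mkₐ_ker k _), Ideal.Quotient.mkₐ_eq_mk]

/-- For `A = k[x₁,…,x_s]`, `J = ⟨f₁,…,f_r⟩`, `B = A/J` and `n ≥ 1`, the
sequence `B^{rM} → B^{N−1} → Ω^{(n)}_{B/k} → 0` is exact, where the first map `T` is given by
the transpose of `Jac_n(f₁,…,f_r)` reduced modulo `J`, and the second map `π` sends the
basis vector `e_α` to `(d^n_B(x̄))^α`: i.e. `π` is surjective and `ker π = im T`.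
(Here `B^{rM}` is the free module on pairs `(i,β)`, `1 ≤ i ≤ r`, `|β| ≤ n−1`, and `B^{N−1}` the
free module on `{α : 1 ≤ |α| ≤ n}`.) -/
theorem statement_3 {k : Type*} [Field k] (s r n : ℕ) (hn : 1 ≤ n)
    (f : Fin r → MvPolynomial (Fin s) k) :
    ∃ π : ((ColIdx s n → (MvPolynomial (Fin s) k ⧸ Ideal.span (Set.range f))) →ₗ[
        MvPolynomial (Fin s) k ⧸ Ideal.span (Set.range f)]
        ↥(OmegaMod k (MvPolynomial (Fin s) k ⧸ Ideal.span (Set.range f)) n)),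
      (∀ α : ColIdx s n,
        ((π (Pi.single α 1) :
            OmegaMod k (MvPolynomial (Fin s) k ⧸ Ideal.span (Set.range f)) n) :
          PParts k (MvPolynomial (Fin s) k ⧸ Ideal.span (Set.range f)) n) =
        ∏ j, dPP k (MvPolynomial (Fin s) k ⧸ Ideal.span (Set.range f)) n
          (Ideal.Quotient.mk (Ideal.span (Set.range f)) (MvPolynomial.X j)) ^ α.1 j) ∧
      Function.Surjective π ∧
      LinearMap.ker π =
        LinearMap.range (Matrix.mulVecLin
          (((JacMatFam n r f).map (Ideal.Quotient.mk (Ideal.span (Set.range f)))).transpose)) :=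
  statement_3_general s r n f
end

section
/- Let k be a field, s ≥ 2, and f ∈ k[x₁,…,x_s] a nonzero polynomial with zero constant term. Let B = k[x₁,…,x_s]/⟨f⟩ and m = (x₁,…,x_s)B. Then for every n ≥ 0, dim_k m^n/m^{n+1} ≥ C(s−2+n, s−2). -/
/-!
Let `f_d` be the initial form of `f` (its nonzero homogeneous component of least degree; `d ≥ 1`)
and let `x_j` occur in `f_d`. The `C(s-2+n, s-2)` monomials of degree `n` not involving `x_j` stay
linearly independent in `mⁿ/mⁿ⁺¹`: a nonzero combination `p` of them lying in `(x)ⁿ⁺¹ + (f)`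
would, after taking components of degree `n`, be a multiple `g_e f_d` of `f_d`, and so would
involve `x_j`.
-/

open MvPolynomial

section Subquotient

variable {k A X W : Type*} [CommRing k] [Ring A] [Algebra k A] [AddCommGroup X] [Module A X]
  [Module k X] [IsScalarTower k A X] [AddCommGroup W] [Module k W] (N P : Submodule A X)

theorem Submodule.finite_quotient_comap_subtype [IsNoetherianRing k] [Module.Finite k (X ⧸ P)] :
    Module.Finite k (N ⧸ P.comap N.subtype) := by
  have hker : LinearMap.ker (P.mkQ ∘ₗ N.subtype) = P.comap N.subtype := by
    rw [LinearMap.ker_comp, Submodule.ker_mkQ]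
  let ι := (P.comap N.subtype).liftQ (P.mkQ ∘ₗ N.subtype) hker.ge
  have hι : LinearMap.ker ι = ⊥ := Submodule.ker_liftQ_eq_bot _ _ _ hker.le
  exact Module.Finite.of_injective (ι.restrictScalars k) (LinearMap.ker_eq_bot.1 hι :)

theorem Submodule.finrank_le_finrank_quotient_comap_subtype [StrongRankCondition k]
    [Module.Finite k (N ⧸ P.comap N.subtype)] (ψ : W →ₗ[k] X) (hN : ∀ w, ψ w ∈ N)
    (hP : ∀ w, ψ w ∈ P → w = 0) :
    Module.finrank k W ≤ Module.finrank k (N ⧸ P.comap N.subtype) := by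
  refine LinearMap.finrank_le_finrank_of_injective
    (f := ((P.comap N.subtype).mkQ.restrictScalars k) ∘ₗ ψ.codRestrict (N.restrictScalars k) hN) ?_
  rw [← LinearMap.ker_eq_bot, LinearMap.ker_eq_bot']
  intro w hw
  exact hP w ((Submodule.Quotient.mk_eq_zero _ (x := (⟨ψ w, hN w⟩ : N))).1 hw)

end Subquotient

namespace Finset

variable {σ : Type*} [Fintype σ] [DecidableEq σ]

theorem degree_eq_and_apply_eq_zero_of_mem_finsuppAntidiag_univ_erase {j : σ} {n : ℕ} {x : σ →₀ ℕ}
    (hx : x ∈ (univ.erase j).finsuppAntidiag n) : x.degree = n ∧ x j = 0 := by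
  obtain ⟨hsum, hsupp⟩ := mem_finsuppAntidiag.1 hx
  have hj : x j = 0 := Finsupp.notMem_support_iff.1 fun h => by simpa using hsupp h
  refine ⟨?_, hj⟩
  rw [Finsupp.degree_eq_sum, ← add_sum_erase _ _ (mem_univ j), hj, zero_add, hsum]

end Finset

namespace MvPolynomial

variable {σ R : Type*} [CommRing R]

section Homogeneous

variable {p q : MvPolynomial σ R} {d e n : ℕ}

theorem homogeneousComponent_eq_zero_of_mem_pow_idealOfVars
    (hp : p ∈ idealOfVars σ R ^ n) (hd : d < n) : homogeneousComponent d p = 0 :=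
  homogeneousComponent_eq_zero' d p fun x hx =>
    (hd.trans_le ((mem_pow_idealOfVars_iff n p).1 hp x hx)).ne'

theorem IsHomogeneous.mem_pow_idealOfVars (hp : p.IsHomogeneous n) : p ∈ idealOfVars σ R ^ n :=
  (mem_pow_idealOfVars_iff n p).2 fun x hx => by
    by_contra h
    exact mem_support_iff.1 hx (hp.coeff_eq_zero (by omega))

theorem homogeneousComponent_degree_ne_zero {x : σ →₀ ℕ} (hx : x ∈ p.support) :
    homogeneousComponent x.degree p ≠ 0 := fun h =>
  mem_support_iff.1 hx (by simpa [coeff_homogeneousComponent] using congr_arg (coeff x) h)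

theorem exists_mem_pow_idealOfVars_homogeneousComponent_ne_zero (hp : p ≠ 0) :
    ∃ e, p ∈ idealOfVars σ R ^ e ∧ homogeneousComponent e p ≠ 0 := by
  classical
  have hex : ∃ e, homogeneousComponent e p ≠ 0 := by
    obtain ⟨x, hx⟩ := support_nonempty.2 hp
    exact ⟨_, homogeneousComponent_degree_ne_zero hx⟩
  exact ⟨Nat.find hex, (mem_pow_idealOfVars_iff _ p).2 fun x hx =>
    Nat.find_min' hex (homogeneousComponent_degree_ne_zero hx), Nat.find_spec hex⟩

theorem coe_homogeneousComponent (p : MvPolynomial σ R) :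
    (homogeneousComponent n p : MvPowerSeries σ R) = MvPowerSeries.homogeneousComponent n p := by
  ext x
  simp [coeff_homogeneousComponent, MvPowerSeries.coeff_homogeneousComponent]

theorem homogeneousComponent_mul_of_mem_pow_idealOfVars
    (hp : p ∈ idealOfVars σ R ^ d) (hq : q ∈ idealOfVars σ R ^ e) :
    homogeneousComponent (d + e) (p * q) =
      homogeneousComponent d p * homogeneousComponent e q := by
  have order_le {r : MvPolynomial σ R} {m : ℕ} (hr : r ∈ idealOfVars σ R ^ m) :
      (m : ℕ∞) ≤ (r : MvPowerSeries σ R).order :=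
    MvPowerSeries.nat_le_order fun x hx => by
      rw [coeff_coe]; exact (mem_pow_idealOfVars_iff' m r).1 hr x hx
  apply coe_injective
  push_cast [coe_homogeneousComponent]
  exact MvPowerSeries.homogeneousComponent_mul_of_le_order (order_le hp) (order_le hq)

theorem exists_degreeOf_homogeneousComponent_ne_zero (hp : p ≠ 0) (hp0 : coeff 0 p = 0) :
    ∃ d j, p ∈ idealOfVars σ R ^ d ∧ degreeOf j (homogeneousComponent d p) ≠ 0 := by
  obtain ⟨d, hpd, hd⟩ := exists_mem_pow_idealOfVars_homogeneousComponent_ne_zero hp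
  obtain ⟨x, hx⟩ := support_nonempty.2 hd
  have hxd : x.degree = d := by
    by_contra h
    exact mem_support_iff.1 hx (by simp [coeff_homogeneousComponent, h])
  have hx0 : x ≠ 0 := by
    rintro rfl
    subst hxd
    exact hd (by simp [homogeneousComponent_zero, hp0])
  obtain ⟨j, hj⟩ := Finsupp.support_nonempty_iff.2 hx0
  exact ⟨d, j, hpd, (Nat.pos_of_ne_zero (Finsupp.mem_support_iff.1 hj)).trans_le
    (monomial_le_degreeOf j hx) |>.ne'⟩

end Homogeneous

section IsDomain

variable [IsDomain R]

theorem IsHomogeneous.eq_zero_of_mem_pow_idealOfVars_sup_span_singleton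
    {f p : MvPolynomial σ R} {d n : ℕ} {j : σ}
    (hf : f ∈ idealOfVars σ R ^ d) (hfj : degreeOf j (homogeneousComponent d f) ≠ 0)
    (hp : p.IsHomogeneous n) (hpj : degreeOf j p = 0)
    (hmem : p ∈ idealOfVars σ R ^ (n + 1) ⊔ Ideal.span {f}) : p = 0 := by
  obtain ⟨q, hq, _, hgf, rfl⟩ := Submodule.mem_sup.1 hmem
  obtain ⟨g, rfl⟩ := Ideal.mem_span_singleton'.1 hgf
  have hcomp (m : ℕ) (hm : m ≤ n) :
      homogeneousComponent m (q + g * f) = homogeneousComponent m (g * f) := by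
    rw [map_add, homogeneousComponent_eq_zero_of_mem_pow_idealOfVars hq (by omega), zero_add]
  have hpn : q + g * f = homogeneousComponent n (g * f) := by
    rw [← hcomp n le_rfl, homogeneousComponent_of_mem ((mem_homogeneousSubmodule _ _).2 hp),
      if_pos rfl]
  rcases eq_or_ne g 0 with rfl | hg
  · simpa using hpn
  obtain ⟨e, hge, hge0⟩ := exists_mem_pow_idealOfVars_homogeneousComponent_ne_zero hg
  have hfd0 : homogeneousComponent d f ≠ 0 := fun h => by simp [h] at hfj
  have hlead := homogeneousComponent_mul_of_mem_pow_idealOfVars hge hf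
  rcases lt_or_ge n (e + d) with hlt | hle
  · rw [hpn, homogeneousComponent_eq_zero_of_mem_pow_idealOfVars
      (pow_add (idealOfVars σ R) e d ▸ Ideal.mul_mem_mul hge hf) hlt]
  -- the component of degree `e + d` is `g_e f_d ≠ 0`, so `e + d = n` and `p = g_e f_d`
  have hed : e + d = n := by
    by_contra hne
    apply mul_ne_zero hge0 hfd0
    rw [← hlead, ← hcomp _ hle, homogeneousComponent_of_mem ((mem_homogeneousSubmodule _ _).2 hp),
      if_neg hne]
  rw [hpn, ← hed, hlead, degreeOf_mul_eq hge0 hfd0] at hpj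
  omega

end IsDomain

section Finiteness

variable {B : Type*} [CommRing B] [Algebra R B] [Finite σ]

theorem finite_quotient_pow_succ_map_idealOfVars {φ : MvPolynomial σ R →ₐ[R] B}
    (hφ : Function.Surjective φ) (n : ℕ) :
    Module.Finite R (B ⧸ Ideal.map φ (idealOfVars σ R) ^ (n + 1)) := by
  have hsup : restrictTotalDegree σ R n ⊔ (idealOfVars σ R ^ (n + 1)).restrictScalars R = ⊤ := by
    rw [eq_top_iff, ← restrictSupport_univ, restrictSupport_eq_span, Submodule.span_le]
    rintro _ ⟨x, -, rfl⟩
    rcases le_or_gt x.degree n with h | h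
    · exact Submodule.mem_sup_left <| (mem_restrictTotalDegree _ _ _).2 <|
        (totalDegree_monomial_le x 1).trans (by rwa [Finsupp.degree_apply] at h)
    · refine Submodule.mem_sup_right <| (mem_pow_idealOfVars_iff _ _).2 fun y hy => ?_
      rw [Finset.mem_singleton.1 (support_monomial_subset hy)]
      exact h
  refine Module.Finite.of_surjective ((Ideal.Quotient.mkₐ R _).toLinearMap ∘ₗ φ.toLinearMap ∘ₗ
    (restrictTotalDegree σ R n).subtype) fun y => ?_
  obtain ⟨b, rfl⟩ := Ideal.Quotient.mk_surjective y
  obtain ⟨p, rfl⟩ := hφ b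
  obtain ⟨u, hu, v, hv, rfl⟩ := Submodule.mem_sup.1 (hsup ▸ Submodule.mem_top : p ∈ _)
  refine ⟨⟨u, hu⟩, Ideal.Quotient.eq.2 ?_⟩
  rw [← Ideal.map_pow]
  simpa using (Ideal.neg_mem_iff _).2 (Ideal.mem_map_of_mem φ hv)

end Finiteness

section Fintype

variable [Fintype σ] [DecidableEq σ]

theorem isHomogeneous_and_degreeOf_eq_zero_of_mem_restrictSupport {j : σ} {n : ℕ}
    {p : MvPolynomial σ R}
    (hp : p ∈ restrictSupport R ((Finset.univ.erase j).finsuppAntidiag n : Set (σ →₀ ℕ))) :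
    p.IsHomogeneous n ∧ degreeOf j p = 0 := by
  have hx {x} (hx : x ∈ p.support) :=
    Finset.degree_eq_and_apply_eq_zero_of_mem_finsuppAntidiag_univ_erase (hp hx)
  refine ⟨fun x hx' => ?_, Nat.le_zero.1 (degreeOf_le_iff.2 fun x h => (hx h).2.le)⟩
  rw [Pi.one_def, ← Finsupp.degree_eq_weight_one]
  exact (hx (mem_support_iff.2 hx')).1

variable {k : Type*} [Field k]

theorem choose_le_finrank_pow_quotient_pow_succ {f : MvPolynomial σ k} (hf0 : f ≠ 0)
    (hfc : coeff 0 f = 0) (n : ℕ) :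
    (Fintype.card σ - 1 + n - 1).choose n ≤
      Module.finrank k
        (↥(Ideal.map (Ideal.Quotient.mk (Ideal.span {f})) (idealOfVars σ k) ^ n) ⧸
          Submodule.comap
            (Ideal.map (Ideal.Quotient.mk (Ideal.span {f})) (idealOfVars σ k) ^ n).subtype
            (Ideal.map (Ideal.Quotient.mk (Ideal.span {f})) (idealOfVars σ k) ^ (n + 1))) := by
  obtain ⟨d, j, hfd, hfj⟩ := exists_degreeOf_homogeneousComponent_ne_zero hf0 hfc
  set φ := Ideal.Quotient.mkₐ k (Ideal.span {f})
  have hφ : Function.Surjective φ := Ideal.Quotient.mkₐ_surjective k _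
  have hker : RingHom.ker φ = Ideal.span {f} := Ideal.Quotient.mkₐ_ker k _
  rw [show Ideal.map (Ideal.Quotient.mk (Ideal.span {f})) (idealOfVars σ k) =
    Ideal.map φ (idealOfVars σ k) from rfl]
  set M := Ideal.map φ (idealOfVars σ k)
  set S := (Finset.univ.erase j).finsuppAntidiag n
  have := finite_quotient_pow_succ_map_idealOfVars hφ n
  have := Submodule.finite_quotient_comap_subtype (k := k) (M ^ n) (M ^ (n + 1))
  calc (Fintype.card σ - 1 + n - 1).choose n = S.card := by
        rw [Finset.card_finsuppAntidiag_nat_eq_choose, Finset.card_erase_of_mem (Finset.mem_univ j),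
          Finset.card_univ]
    _ = Module.finrank k (restrictSupport k (S : Set (σ →₀ ℕ))) := by
        simp [Module.finrank_eq_card_basis (basisRestrictSupport k _)]
    _ ≤ _ := by
      refine Submodule.finrank_le_finrank_quotient_comap_subtype _ _
        (φ.toLinearMap ∘ₗ (restrictSupport k _).subtype) (fun p => ?_) (fun p hp => ?_)
      · rw [← Ideal.map_pow]
        exact Ideal.mem_map_of_mem φ
          (isHomogeneous_and_degreeOf_eq_zero_of_mem_restrictSupport p.2).1.mem_pow_idealOfVars
      · change φ p ∈ _ at hp
        rw [← Ideal.map_pow, ← Ideal.mem_comap, Ideal.comap_map_of_surjective' _ hφ, hker] at hp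
        obtain ⟨hpn, hpj⟩ := isHomogeneous_and_degreeOf_eq_zero_of_mem_restrictSupport p.2
        exact Submodule.coe_eq_zero.1 <|
          hpn.eq_zero_of_mem_pow_idealOfVars_sup_span_singleton hfd hfj hpj hp

end Fintype

end MvPolynomial

/-- Let `k` be a field, `s ≥ 2`, and `f ∈ k[x₁,…,x_s]` a nonzero
polynomial with zero constant term. Let `B = k[x₁,…,x_s]/⟨f⟩` and `m = (x₁,…,x_s)B`.
Then for every `n ≥ 0`, `dim_k mⁿ/m^{n+1} ≥ C(s−2+n, s−2)`. -/
theorem statement_10 {k : Type*} [Field k] (s : ℕ) (hs : 2 ≤ s)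
    (f : MvPolynomial (Fin s) k) (hf0 : f ≠ 0) (hfc : MvPolynomial.coeff 0 f = 0) (n : ℕ) :
    Nat.choose (s - 2 + n) (s - 2) ≤
      Module.finrank k
        (↥((Ideal.span (Set.range fun i : Fin s =>
              Ideal.Quotient.mk (Ideal.span {f}) (MvPolynomial.X i))) ^ n) ⧸
          Submodule.comap
            (((Ideal.span (Set.range fun i : Fin s =>
              Ideal.Quotient.mk (Ideal.span {f}) (MvPolynomial.X i))) ^ n).subtype)
            ((Ideal.span (Set.range fun i : Fin s =>
              Ideal.Quotient.mk (Ideal.span {f}) (MvPolynomial.X i))) ^ (n + 1))) := by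
  have hm : Ideal.span (Set.range fun i : Fin s => Ideal.Quotient.mk (Ideal.span {f}) (X i)) =
      Ideal.map (Ideal.Quotient.mk (Ideal.span {f})) (idealOfVars (Fin s) k) := by
    rw [Ideal.map_span, ← Set.range_comp]
    rfl
  have hchoose : (s - 2 + n).choose (s - 2) = (Fintype.card (Fin s) - 1 + n - 1).choose n := by
    rw [Nat.choose_symm_add, Fintype.card_fin, show s - 1 + n - 1 = s - 2 + n by omega]
  rw [hm, hchoose]
  exact choose_le_finrank_pow_quotient_pow_succ hf0 hfc n
end
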